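/- Let 0 ≤ λ < γ ≤ δ, and let n ≥ 1, N ≥ 2 be integers. Define K*(r) = r^n + Σ_{m=2}^∞ c_m r^{nm} + Σ_{m=N}^∞ c_m r^m − 1 − Σ_{m=2}^∞ (−1)^{m−1} c_m on [0,1], where c_m = 4(γ−λ)/(m^2(2γ+(δ−γ)(m−1))). Then K* is continuous on [0,1], strictly increasing on (0,1), K*(0) < 0, K*(1) > 0, and K* has a unique root in (0,1). -/

import Mathlib

/-!
Every coefficient `c m` is nonnegative and `c m ≤ C / m ^ 2`, so the series in `K*` converge
absolutely on `[0, 1]`; there each power series is continuous (Weierstrass M-test) and monotone,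
and the term `r ^ n` makes `K*` strictly increasing. The constant term is `A - 1`, where
`A = ∑ (-1) ^ m c (m + 2)` is an alternating series with decreasing terms, so
`0 ≤ A ≤ c 2 = (γ - lam) / (γ + δ) < 1`. Hence `K*(0) = A - 1 < 0` and
`K*(1) ≥ ∑_{m ≥ N} c m > 0`, and the intermediate value theorem gives a root, unique by strict
monotonicity.
-/

open Real Set

theorem Antitone.tsum_alternating_mem_Icc {f : ℕ → ℝ} (hfa : Antitone f) (hf : Summable f) :
    ∑' i, (-1) ^ i * f i ∈ Icc 0 (f 0) := by
  have hsum : Summable fun i => (-1) ^ i * f i :=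
    (summable_abs_iff.mpr hf).of_norm_bounded fun _ => by simp
  have htendsto := hsum.hasSum.tendsto_sum_nat
  constructor
  · simpa using hfa.alternating_series_le_tendsto htendsto 0
  · simpa using hfa.tendsto_le_alternating_series htendsto 0

section PowerSeries

variable {g : ℕ → ℝ} (e : ℕ → ℕ)

theorem summable_mul_pow_of_mem_Icc (hg0 : ∀ m, 0 ≤ g m) (hg : Summable g) {r : ℝ}
    (hr : r ∈ Icc (0 : ℝ) 1) : Summable fun m => g m * r ^ e m :=
  hg.of_nonneg_of_le (fun m => mul_nonneg (hg0 m) (pow_nonneg hr.1 _))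
    fun m => mul_le_of_le_one_right (hg0 m) (pow_le_one₀ hr.1 hr.2)

theorem continuousOn_tsum_mul_pow (hg0 : ∀ m, 0 ≤ g m) (hg : Summable g) :
    ContinuousOn (fun r => ∑' m, g m * r ^ e m) (Icc 0 1) := by
  refine continuousOn_tsum (fun m => (continuous_const.mul (continuous_pow _)).continuousOn) hg
    fun m r hr => ?_
  rw [norm_mul, norm_of_nonneg (hg0 m), norm_of_nonneg (pow_nonneg hr.1 _)]
  exact mul_le_of_le_one_right (hg0 m) (pow_le_one₀ hr.1 hr.2)

theorem monotoneOn_tsum_mul_pow (hg0 : ∀ m, 0 ≤ g m) (hg : Summable g) :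
    MonotoneOn (fun r => ∑' m, g m * r ^ e m) (Icc 0 1) := fun _ hr _ hs hrs =>
  Summable.tsum_le_tsum (fun m => mul_le_mul_of_nonneg_left (pow_le_pow_left₀ hr.1 hrs _) (hg0 m))
    (summable_mul_pow_of_mem_Icc e hg0 hg hr) (summable_mul_pow_of_mem_Icc e hg0 hg hs)

end PowerSeries

noncomputable def kstarCoeff (γ δ lam : ℝ) (m : ℕ) : ℝ :=
  4 * (γ - lam) / ((m : ℝ) ^ 2 * (2 * γ + (δ - γ) * ((m : ℝ) - 1)))

section Coefficients

variable {γ δ lam : ℝ}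

theorem kstarCoeff_denom_pos (hγ : 0 < γ) (hg : γ ≤ δ) {m : ℕ} (hm : 1 ≤ m) :
    0 < (m : ℝ) ^ 2 * (2 * γ + (δ - γ) * ((m : ℝ) - 1)) := by
  have h1 : (1 : ℝ) ≤ m := by exact_mod_cast hm
  have hD : 0 < 2 * γ + (δ - γ) * ((m : ℝ) - 1) := by nlinarith
  positivity

theorem kstarCoeff_pos (hγ : 0 < γ) (hl : lam < γ) (hg : γ ≤ δ) {m : ℕ} (hm : 1 ≤ m) :
    0 < kstarCoeff γ δ lam m :=
  div_pos (by linarith) (kstarCoeff_denom_pos hγ hg hm)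

-- At `m = 0` the denominator vanishes, so `kstarCoeff γ δ lam 0 = 0` (Lean's `x / 0 = 0`).
theorem kstarCoeff_nonneg (hγ : 0 < γ) (hl : lam < γ) (hg : γ ≤ δ) (m : ℕ) :
    0 ≤ kstarCoeff γ δ lam m := by
  rcases Nat.eq_zero_or_pos m with rfl | hm
  · simp [kstarCoeff]
  · exact (kstarCoeff_pos hγ hl hg hm).le

theorem kstarCoeff_antitoneOn (hγ : 0 < γ) (hl : lam < γ) (hg : γ ≤ δ) :
    AntitoneOn (kstarCoeff γ δ lam) (Ici 1) := by
  intro j hj k _ hjk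
  have hj1 : (1 : ℝ) ≤ j := by exact_mod_cast hj
  have hjk' : (j : ℝ) ≤ k := by exact_mod_cast hjk
  apply div_le_div_of_nonneg_left (by linarith) (kstarCoeff_denom_pos hγ hg hj)
  gcongr

theorem kstarCoeff_le_div_sq (hγ : 0 < γ) (hl : lam < γ) (hg : γ ≤ δ) (m : ℕ) :
    kstarCoeff γ δ lam m ≤ 2 * (γ - lam) / γ * (1 / (m : ℝ) ^ 2) := by
  rcases Nat.eq_zero_or_pos m with rfl | hm
  · simp [kstarCoeff]
  have h1 : (1 : ℝ) ≤ m := by exact_mod_cast hm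
  rw [kstarCoeff, div_mul_div_comm, mul_one,
    div_le_div_iff₀ (kstarCoeff_denom_pos hγ hg hm) (by positivity)]
  nlinarith [mul_nonneg (mul_nonneg (sub_nonneg.2 hl.le) (sq_nonneg (m : ℝ)))
    (mul_nonneg (sub_nonneg.2 hg) (by linarith : (0 : ℝ) ≤ m - 1))]

theorem summable_kstarCoeff (hγ : 0 < γ) (hl : lam < γ) (hg : γ ≤ δ) :
    Summable (kstarCoeff γ δ lam) :=
  ((Real.summable_one_div_nat_pow.mpr one_lt_two).mul_left _).of_nonneg_of_le
    (kstarCoeff_nonneg hγ hl hg) (kstarCoeff_le_div_sq hγ hl hg)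

theorem kstarCoeff_two_lt_one (hlam : 0 ≤ lam) (hl : lam < γ) (hg : γ ≤ δ) :
    kstarCoeff γ δ lam 2 < 1 := by
  rw [kstarCoeff, div_lt_one] <;> norm_num <;> linarith

end Coefficients

theorem existsUnique_mem_Ioo_eq_zero {f : ℝ → ℝ} {a b : ℝ} (hab : a ≤ b)
    (hf : ContinuousOn f (Icc a b)) (hmono : StrictMonoOn f (Ioo a b)) (ha : f a < 0)
    (hb : 0 < f b) : ∃! x, x ∈ Ioo a b ∧ f x = 0 := by
  obtain ⟨x, hx, hfx⟩ := intermediate_value_Ioo hab hf ⟨ha, hb⟩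
  exact ⟨x, ⟨hx, hfx⟩, fun y ⟨hy, hfy⟩ => hmono.injOn hy hx (hfy.trans hfx.symm)⟩

theorem Kstar_unique_root (γ δ lam : ℝ) (hlam : 0 ≤ lam) (hl : lam < γ) (hg : γ ≤ δ)
    (n N : ℕ) (hn : 1 ≤ n) (hN : 2 ≤ N)
    (c : ℕ → ℝ)
    (hc : ∀ m : ℕ, c m = 4 * (γ - lam) / ((m : ℝ) ^ 2 * (2 * γ + (δ - γ) * ((m : ℝ) - 1))))
    (Kstar : ℝ → ℝ)
    (hK : ∀ r : ℝ, Kstar r =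
      r ^ n + (∑' m : ℕ, c (m + 2) * r ^ (n * (m + 2)))
        + (∑' m : ℕ, c (m + N) * r ^ (m + N))
        - 1 - ∑' m : ℕ, (-1 : ℝ) ^ (m + 1) * c (m + 2)) :
    ContinuousOn Kstar (Icc 0 1) ∧ StrictMonoOn Kstar (Ioo 0 1) ∧
      Kstar 0 < 0 ∧ 0 < Kstar 1 ∧ (∃! r : ℝ, r ∈ Ioo (0 : ℝ) 1 ∧ Kstar r = 0) := by
  have hγ : 0 < γ := hlam.trans_lt hl
  obtain rfl : c = kstarCoeff γ δ lam := funext hc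
  have hc0 := kstarCoeff_nonneg hγ hl hg
  have hcs := summable_kstarCoeff hγ hl hg
  have hs2 := (summable_nat_add_iff 2).mpr hcs
  have hsN := (summable_nat_add_iff N).mpr hcs
  set A := ∑' m : ℕ, (-1 : ℝ) ^ m * kstarCoeff γ δ lam (m + 2)
  have hA : A ∈ Icc 0 (kstarCoeff γ δ lam 2) :=
    Antitone.tsum_alternating_mem_Icc (fun _ _ _ => kstarCoeff_antitoneOn hγ hl hg
      (mem_Ici.2 (by omega)) (mem_Ici.2 (by omega)) (by omega)) hs2
  have hK' : Kstar = fun r =>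
      r ^ n + (∑' m : ℕ, kstarCoeff γ δ lam (m + 2) * r ^ (n * (m + 2)))
        + (∑' m : ℕ, kstarCoeff γ δ lam (m + N) * r ^ (m + N)) + (A - 1) := by
    ext r
    simp only [hK, A, pow_succ, mul_neg_one, neg_mul, tsum_neg]
    ring
  have hcont : ContinuousOn Kstar (Icc 0 1) := hK' ▸
    ((((continuous_pow n).continuousOn.add (continuousOn_tsum_mul_pow _ (fun _ => hc0 _) hs2)).add
      (continuousOn_tsum_mul_pow _ (fun _ => hc0 _) hsN)).add continuousOn_const)
  have hmono : StrictMonoOn Kstar (Ioo 0 1) := hK' ▸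
    ((((pow_left_strictMonoOn₀ (by omega)).mono fun _ hr => le_of_lt hr.1).add_monotone
      ((monotoneOn_tsum_mul_pow _ (fun _ => hc0 _) hs2).mono Ioo_subset_Icc_self)).add_monotone
      ((monotoneOn_tsum_mul_pow _ (fun _ => hc0 _) hsN).mono Ioo_subset_Icc_self)).add_monotone
      monotoneOn_const
  have h0 : Kstar 0 < 0 := by
    have hK0 : Kstar 0 = A - 1 := by simp [hK', show n ≠ 0 by omega, show N ≠ 0 by omega]
    linarith [hA.2, kstarCoeff_two_lt_one hlam hl hg]
  have h1 : 0 < Kstar 1 := by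
    have hpos := hsN.tsum_pos (fun _ => hc0 _) 0 (kstarCoeff_pos hγ hl hg (by omega))
    have hnonneg : 0 ≤ ∑' m : ℕ, kstarCoeff γ δ lam (m + 2) := tsum_nonneg fun _ => hc0 _
    simp only [hK', one_pow, mul_one]
    linarith [hA.1]
  exact ⟨hcont, hmono, h0, h1, existsUnique_mem_Ioo_eq_zero zero_le_one hcont hmono h0 h1⟩
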